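/- Let S = ℂ[T_1, …, T_r] be a polynomial ring graded by a finitely generated abelian group K via deg(T_i) = q_i, and suppose the grading is pointed. Then every (φ, ψ) ∈ Aut_K(S) satisfies ψ({q_1, …, q_r}) = {q_1, …, q_r}, i.e., ψ permutes the set of generator weights Ω_S. -/

import Mathlib

open TensorProduct

/-!
A nonzero weight `w` of a graded algebra is a generator weight when the component of degree `w`
is not contained in the span of the products of components of nonzero degree. This notion only
involves the graded algebra structure, so a graded automorphism `(φ, ψ)` maps generator weights
to generator weights via `ψ`. For a polynomial ring in which no variable has weight `0` (which
`S₀ = ℂ` forces), the generator weights are exactly the `q i`: the coefficient of `X i`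
vanishes on every product of two polynomials without constant term, while a monomial of weight
`w ∉ {q i}` is `X i` times a monomial of nonzero weight.
-/

noncomputable def wtGrading {K : Type} [AddCommGroup K] {r : ℕ} (q : Fin r → K) :
    K → Submodule ℂ (MvPolynomial (Fin r) ℂ) := fun w =>
  Submodule.span ℂ {m | ∃ ν : Fin r →₀ ℕ,
    m = MvPolynomial.monomial ν (1 : ℂ) ∧ ν.sum (fun i n => n • q i) = w}

section Decomposable

variable {R A B M N : Type*} [CommSemiring R] [Semiring A] [Algebra R A] [Semiring B]
  [Algebra R B] [AddMonoid M] [AddMonoid N]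

def decomposablePart (S : M → Submodule R A) (w : M) : Submodule R A :=
  ⨆ (u : M) (v : M) (_ : u + v = w) (_ : u ≠ 0) (_ : v ≠ 0), S u * S v

def IsGeneratorWeight (S : M → Submodule R A) (w : M) : Prop :=
  w ≠ 0 ∧ ¬ S w ≤ decomposablePart S w

theorem decomposablePart_le_iff {S : M → Submodule R A} {w : M} {P : Submodule R A} :
    decomposablePart S w ≤ P ↔ ∀ u v, u + v = w → u ≠ 0 → v ≠ 0 → S u * S v ≤ P := by
  simp only [decomposablePart, iSup_le_iff]

theorem mul_le_decomposablePart (S : M → Submodule R A) {u v : M} (hu : u ≠ 0) (hv : v ≠ 0) :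
    S u * S v ≤ decomposablePart S (u + v) :=
  le_iSup_of_le u <| le_iSup_of_le v <| le_iSup_of_le rfl <| le_iSup_of_le hu <|
    le_iSup_of_le hv le_rfl

variable {S : M → Submodule R A} {T : N → Submodule R B} {φ : A ≃ₐ[R] B} {ψ : M ≃+ N}

theorem map_decomposablePart_le (h : ∀ w, (S w).map (φ : A →ₗ[R] B) = T (ψ w)) (w : M) :
    (decomposablePart S w).map (φ : A →ₗ[R] B) ≤ decomposablePart T (ψ w) := by
  rw [Submodule.map_le_iff_le_comap, decomposablePart_le_iff]
  rintro u v rfl hu hv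
  rw [← Submodule.map_le_iff_le_comap]
  calc (S u * S v).map (φ : A →ₗ[R] B)
      = T (ψ u) * T (ψ v) := by
        rw [← h u, ← h v]
        exact Submodule.map_mul (S u) (S v) φ.toAlgHom
    _ ≤ decomposablePart T (ψ (u + v)) := by
        rw [map_add]
        exact mul_le_decomposablePart T (by simpa using hu) (by simpa using hv)

theorem map_symm_eq (h : ∀ w, (S w).map (φ : A →ₗ[R] B) = T (ψ w)) (w : N) :
    (T w).map (φ.symm : B →ₗ[R] A) = S (ψ.symm w) := by
  obtain ⟨v, rfl⟩ := ψ.surjective w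
  rw [← h, ψ.symm_apply_apply, ← Submodule.map_comp]
  convert Submodule.map_id (S v)
  ext
  simp

theorem le_decomposablePart_of_map (h : ∀ w, (S w).map (φ : A →ₗ[R] B) = T (ψ w)) {w : M}
    (hw : S w ≤ decomposablePart S w) : T (ψ w) ≤ decomposablePart T (ψ w) := by
  rw [← h]
  exact (Submodule.map_mono hw).trans (map_decomposablePart_le h w)

theorem isGeneratorWeight_map_iff (h : ∀ w, (S w).map (φ : A →ₗ[R] B) = T (ψ w)) (w : M) :
    IsGeneratorWeight T (ψ w) ↔ IsGeneratorWeight S w := by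
  refine and_congr (by simp) (not_congr ⟨fun hT => ?_, le_decomposablePart_of_map h⟩)
  simpa using le_decomposablePart_of_map (map_symm_eq h) hT

theorem image_setOf_isGeneratorWeight (h : ∀ w, (S w).map (φ : A →ₗ[R] B) = T (ψ w)) :
    ψ '' {w | IsGeneratorWeight S w} = {w | IsGeneratorWeight T w} := by
  ext w
  obtain ⟨v, rfl⟩ := ψ.surjective w
  simp [isGeneratorWeight_map_iff h]

end Decomposable

namespace MvPolynomial

variable {σ R M : Type*} [CommSemiring R] [AddCommMonoid M] {q : σ → M}

theorem constantCoeff_eq_zero_of_mem_weightedHomogeneousSubmodule {u : M} (hu : u ≠ 0)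
    {p : MvPolynomial σ R} (hp : p ∈ weightedHomogeneousSubmodule R q u) :
    constantCoeff p = 0 := by
  rw [constantCoeff_eq]
  exact IsWeightedHomogeneous.coeff_eq_zero hp 0 (by simpa using hu.symm)

theorem coeff_single_one_mul_eq_zero (i : σ) {p p' : MvPolynomial σ R}
    (hp : constantCoeff p = 0) (hp' : constantCoeff p' = 0) :
    coeff (Finsupp.single i 1) (p * p') = 0 := by
  classical
  rw [constantCoeff_eq] at hp hp'
  rw [coeff_mul, Finsupp.antidiagonal_single]
  simp [Finset.Nat.antidiagonal_succ, hp, hp']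

theorem decomposablePart_le_ker_coeff_single (i : σ) (w : M) :
    decomposablePart (weightedHomogeneousSubmodule R q) w ≤
      LinearMap.ker (lcoeff R (Finsupp.single i 1)) := by
  rw [decomposablePart_le_iff]
  rintro u v - hu hv
  rw [Submodule.mul_le]
  intro p hp p' hp'
  exact coeff_single_one_mul_eq_zero i
    (constantCoeff_eq_zero_of_mem_weightedHomogeneousSubmodule hu hp)
    (constantCoeff_eq_zero_of_mem_weightedHomogeneousSubmodule hv hp')

theorem X_notMem_decomposablePart [Nontrivial R] (i : σ) :
    X i ∉ decomposablePart (weightedHomogeneousSubmodule R q) (q i) := fun hX => by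
  simpa using decomposablePart_le_ker_coeff_single i (q i) hX

theorem weightedHomogeneousSubmodule_le_decomposablePart (hq : ∀ i, q i ≠ 0) {w : M}
    (hw : w ≠ 0) (hwq : w ∉ Set.range q) :
    weightedHomogeneousSubmodule R q w ≤ decomposablePart (weightedHomogeneousSubmodule R q) w := by
  intro p hp
  induction hp using IsWeightedHomogeneous.induction_on with
  | zero => exact zero_mem _
  | add p p' _ _ h h' => exact add_mem h h'
  | monomial d r hd =>
    obtain ⟨i, hi⟩ : ∃ i, d i ≠ 0 := by
      by_contra! hd0
      exact hw (by rw [← hd, show d = 0 from Finsupp.ext hd0, map_zero])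
    obtain ⟨e, rfl⟩ : ∃ e, d = Finsupp.single i 1 + e :=
      ⟨d - Finsupp.single i 1, (add_tsub_cancel_of_le (Finsupp.single_le_iff.mpr
        (Nat.one_le_iff_ne_zero.mpr hi))).symm⟩
    have hwe : q i + Finsupp.weight q e = w := by simpa [Finsupp.weight_single] using hd
    have he : Finsupp.weight q e ≠ 0 := fun he => hwq ⟨i, by rw [← hwe, he, add_zero]⟩
    rw [← hwe, ← one_mul r, ← monomial_mul]
    exact mul_le_decomposablePart _ (hq i) he
      (Submodule.mul_mem_mul (isWeightedHomogeneous_X R q i)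
        (isWeightedHomogeneous_monomial q e r rfl))

theorem isGeneratorWeight_weightedHomogeneousSubmodule_iff [Nontrivial R] (hq : ∀ i, q i ≠ 0)
    {w : M} : IsGeneratorWeight (weightedHomogeneousSubmodule R q) w ↔ w ∈ Set.range q := by
  refine ⟨fun ⟨hw, hle⟩ => ?_, ?_⟩
  · by_contra hwq
    exact hle (weightedHomogeneousSubmodule_le_decomposablePart hq hw hwq)
  · rintro ⟨i, rfl⟩
    exact ⟨hq i, fun hle => X_notMem_decomposablePart i (hle (isWeightedHomogeneous_X R q i))⟩

theorem ne_zero_of_weightedHomogeneousSubmodule_zero_eq_one [Nontrivial R]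
    (h0 : weightedHomogeneousSubmodule R q 0 = 1) (i : σ) : q i ≠ 0 := by
  intro hi
  have hX : X i ∈ weightedHomogeneousSubmodule R q 0 := hi ▸ isWeightedHomogeneous_X R q i
  obtain ⟨c, hc⟩ := Submodule.mem_one.mp (h0 ▸ hX)
  simpa using congrArg totalDegree hc

end MvPolynomial

open MvPolynomial in
theorem wtGrading_eq_weightedHomogeneousSubmodule {K : Type} [AddCommGroup K] {r : ℕ}
    (q : Fin r → K) : wtGrading q = weightedHomogeneousSubmodule ℂ q := by
  funext w
  refine le_antisymm (Submodule.span_le.mpr ?_) fun p hp => ?_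
  · rintro _ ⟨ν, rfl, hν⟩
    exact isWeightedHomogeneous_monomial q ν 1 hν
  · induction hp using IsWeightedHomogeneous.induction_on with
    | zero => exact zero_mem _
    | add p p' _ _ h h' => exact add_mem h h'
    | monomial d c hd =>
      rw [← mul_one c, ← smul_eq_mul, ← smul_monomial]
      exact Submodule.smul_mem _ c (Submodule.subset_span ⟨d, rfl, hd⟩)

theorem aut_permutes_generator_weights_general
    {K : Type} [AddCommGroup K] {r : ℕ} (q : Fin r → K)
    (h0 : wtGrading q 0 = (1 : Submodule ℂ (MvPolynomial (Fin r) ℂ)))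
    (φ : MvPolynomial (Fin r) ℂ ≃ₐ[ℂ] MvPolynomial (Fin r) ℂ) (ψ : K ≃+ K)
    (h : ∀ w : K, Submodule.map (φ : MvPolynomial (Fin r) ℂ →ₗ[ℂ] MvPolynomial (Fin r) ℂ)
      (wtGrading q w) = wtGrading q (ψ w)) :
    ⇑ψ '' Set.range q = Set.range q := by
  rw [wtGrading_eq_weightedHomogeneousSubmodule] at h0 h
  have hq := MvPolynomial.ne_zero_of_weightedHomogeneousSubmodule_zero_eq_one h0
  simpa only [MvPolynomial.isGeneratorWeight_weightedHomogeneousSubmodule_iff hq,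
    Set.ofPred_mem_eq] using image_setOf_isGeneratorWeight h

/-- If the `K`-grading of `S = ℂ[T_1,…,T_r]` given by `deg T_i = q_i`
is pointed, then every `(φ, ψ) ∈ Aut_K(S)` satisfies `ψ({q_1,…,q_r}) = {q_1,…,q_r}`:
`ψ` permutes the set of generator weights. -/
theorem aut_permutes_generator_weights
    {K : Type} [AddCommGroup K] [AddGroup.FG K] {r : ℕ} (q : Fin r → K)
    (h0 : wtGrading q 0 = (1 : Submodule ℂ (MvPolynomial (Fin r) ℂ)))
    (hpointed : ∀ x : ℚ ⊗[ℤ] K,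
      x ∈ Submodule.span {c : ℚ // 0 ≤ c}
            ((fun k : K => ((1 : ℚ) ⊗ₜ[ℤ] k : ℚ ⊗[ℤ] K)) '' {w : K | wtGrading q w ≠ ⊥}) →
      -x ∈ Submodule.span {c : ℚ // 0 ≤ c}
            ((fun k : K => ((1 : ℚ) ⊗ₜ[ℤ] k : ℚ ⊗[ℤ] K)) '' {w : K | wtGrading q w ≠ ⊥}) →
      x = 0)
    (φ : MvPolynomial (Fin r) ℂ ≃ₐ[ℂ] MvPolynomial (Fin r) ℂ) (ψ : K ≃+ K)
    (h : ∀ w : K, Submodule.map (φ : MvPolynomial (Fin r) ℂ →ₗ[ℂ] MvPolynomial (Fin r) ℂ)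
      (wtGrading q w) = wtGrading q (ψ w)) :
    ⇑ψ '' Set.range q = Set.range q :=
  aut_permutes_generator_weights_general q h0 φ ψ h
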